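/- arXiv:1808.03949 — 2 statements merged into one kernel-verified Lean document; each statement's English description precedes it below -/
import Mathlib

section
/- For constants a, b, c > 0 and g(λ) = (a + 1/(bλ)) e^{cλ} on (0, ∞), the point λ* = 2/(c(1 + sqrt(1 + 4ab/c))) is the unique global minimizer of g on (0, ∞): g(λ*) ≤ g(λ) for all λ > 0, with equality only at λ = λ*. -/
open Real Set

/-! With `q(λ) = abcλ² + cλ - 1`, the derivative of `g` is `exp (cλ) q(λ) / (bλ²)`. The point `λ*`
is the positive root of `q`, so `q(λ) = (λ - λ*) (abc (λ + λ*) + c)` where the second factor is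
positive for `λ > 0`. Hence `g` strictly decreases on `(0, λ*]` and strictly increases on
`[λ*, ∞)`. -/

noncomputable def latency (a b c x : ℝ) : ℝ := (a + 1 / (b * x)) * exp (c * x)

noncomputable def optimalRate (a b c : ℝ) : ℝ := 2 / (c * (1 + √(1 + 4 * a * b / c)))

theorem StrictAntiOn.lt_of_strictMonoOn {α β : Type*} [LinearOrder α] [Preorder β] {f : α → β}
    {p m x : α} (hanti : StrictAntiOn f (Ioc p m)) (hmono : StrictMonoOn f (Ici m)) (hm : p < m)
    (hx : p < x) (hne : x ≠ m) : f m < f x := by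
  rcases hne.lt_or_gt with h | h
  · exact hanti ⟨hx, h.le⟩ ⟨hm, le_rfl⟩ h
  · exact hmono le_rfl h.le h

section

variable {a b c : ℝ}

theorem optimalRate_pos (hc : 0 < c) : 0 < optimalRate a b c := by
  unfold optimalRate
  positivity

theorem optimalRate_isRoot (hc : c ≠ 0) (hd : 0 ≤ 1 + 4 * a * b / c) :
    a * b * c * optimalRate a b c ^ 2 + c * optimalRate a b c - 1 = 0 := by
  have hs : c * √(1 + 4 * a * b / c) ^ 2 = c + 4 * a * b := by
    rw [sq_sqrt hd]
    field_simp
  have h1s : 1 + √(1 + 4 * a * b / c) ≠ 0 := by positivity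
  unfold optimalRate
  generalize √(1 + 4 * a * b / c) = s at hs h1s ⊢
  field_simp
  linear_combination -hs

theorem quadratic_eq_sub_mul {L : ℝ} (hL : a * b * c * L ^ 2 + c * L - 1 = 0) (x : ℝ) :
    a * b * c * x ^ 2 + c * x - 1 = (x - L) * (a * b * c * (x + L) + c) := by
  linear_combination hL

theorem hasDerivAt_latency {x : ℝ} (hb : b ≠ 0) (hx : x ≠ 0) :
    HasDerivAt (latency a b c) (exp (c * x) * (a * b * c * x ^ 2 + c * x - 1) / (b * x ^ 2)) x := by
  have hinv : HasDerivAt (fun y => a + 1 / (b * y)) (-b / (b * x) ^ 2) x := by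
    simpa [one_div, neg_div] using (((hasDerivAt_id x).const_mul b).inv (by positivity)).const_add a
  have hexp : HasDerivAt (fun y => exp (c * y)) (exp (c * x) * c) x := by
    simpa using ((hasDerivAt_id x).const_mul c).exp
  refine (hinv.mul hexp).congr_deriv ?_
  field_simp
  ring

theorem hasDerivAt_latency_eq_sub_optimalRate_mul (ha : 0 < a) (hb : 0 < b) (hc : 0 < c)
    {x : ℝ} (hx : 0 < x) :
    ∃ k > 0, HasDerivAt (latency a b c) ((x - optimalRate a b c) * k) x := by
  have hroot := optimalRate_isRoot (a := a) (b := b) hc.ne' (by positivity)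
  have hL := optimalRate_pos (a := a) (b := b) hc
  refine ⟨exp (c * x) * (a * b * c * (x + optimalRate a b c) + c) / (b * x ^ 2), by positivity, ?_⟩
  convert hasDerivAt_latency (c := c) hb.ne' hx.ne' using 1
  rw [quadratic_eq_sub_mul hroot]
  ring

theorem latency_strictAntiOn (ha : 0 < a) (hb : 0 < b) (hc : 0 < c) :
    StrictAntiOn (latency a b c) (Ioc 0 (optimalRate a b c)) := by
  refine strictAntiOn_of_deriv_neg (convex_Ioc _ _) (fun x hx => ?_) (fun x hx => ?_)
  · obtain ⟨k, -, hk⟩ := hasDerivAt_latency_eq_sub_optimalRate_mul ha hb hc hx.1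
    exact hk.continuousAt.continuousWithinAt
  · rw [interior_Ioc] at hx
    obtain ⟨k, hk, hderiv⟩ := hasDerivAt_latency_eq_sub_optimalRate_mul ha hb hc hx.1
    rw [hderiv.deriv]
    exact mul_neg_of_neg_of_pos (sub_neg.mpr hx.2) hk

theorem latency_strictMonoOn (ha : 0 < a) (hb : 0 < b) (hc : 0 < c) :
    StrictMonoOn (latency a b c) (Ici (optimalRate a b c)) := by
  have hL := optimalRate_pos (a := a) (b := b) hc
  refine strictMonoOn_of_deriv_pos (convex_Ici _) (fun x hx => ?_) (fun x hx => ?_)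
  · obtain ⟨k, -, hk⟩ := hasDerivAt_latency_eq_sub_optimalRate_mul ha hb hc (hL.trans_le hx)
    exact hk.continuousAt.continuousWithinAt
  · rw [interior_Ici] at hx
    obtain ⟨k, hk, hderiv⟩ := hasDerivAt_latency_eq_sub_optimalRate_mul ha hb hc (hL.trans hx)
    rw [hderiv.deriv]
    exact mul_pos (sub_pos.mpr hx) hk

end

/-- For `a, b, c > 0`, `λ* = 2 / (c (1 + √(1 + 4ab/c)))` is the unique global
minimizer of `g(λ) = (a + 1/(bλ)) exp(cλ)` on `(0, ∞)`. -/
theorem latency_global_minimizer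
    (a b c : ℝ) (ha : 0 < a) (hb : 0 < b) (hc : 0 < c) :
    ∀ lam : ℝ, 0 < lam →
      ((a + 1 / (b * (2 / (c * (1 + Real.sqrt (1 + 4 * a * b / c)))))) *
          Real.exp (c * (2 / (c * (1 + Real.sqrt (1 + 4 * a * b / c)))))
        ≤ (a + 1 / (b * lam)) * Real.exp (c * lam)) ∧
      ((a + 1 / (b * (2 / (c * (1 + Real.sqrt (1 + 4 * a * b / c)))))) *
          Real.exp (c * (2 / (c * (1 + Real.sqrt (1 + 4 * a * b / c)))))
        = (a + 1 / (b * lam)) * Real.exp (c * lam) →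
          lam = 2 / (c * (1 + Real.sqrt (1 + 4 * a * b / c)))) := by
  intro lam hlam
  change latency a b c (optimalRate a b c) ≤ latency a b c lam ∧
    (latency a b c (optimalRate a b c) = latency a b c lam → lam = optimalRate a b c)
  by_cases h : lam = optimalRate a b c
  · exact ⟨h ▸ le_rfl, fun _ => h⟩
  · have hlt := (latency_strictAntiOn ha hb hc).lt_of_strictMonoOn (latency_strictMonoOn ha hb hc)
      (optimalRate_pos hc) hlam h
    exact ⟨hlt.le, fun heq => absurd heq hlt.ne⟩
end

section
/- For N_M ≥ 1 independent exponential(λ) mining times T_1, ..., T_{N_M} and nonnegative propagation delays t_1, ..., t_{N_M}, the probability that no forking occurs, i.e., Pr(for all j ≠ ô: T_j − T_ô > t_j) where ô = argmin_j T_j, equals Σ_{i=1}^{N_M} ∫_0^∞ λe^{-λx} ∏_{j≠i} e^{-λ(x + t_j)} dx = (1/N_M) Σ_{i=1}^{N_M} e^{-λ Σ_{j≠i} t_j} when delays enter only through the sum; in particular if all t_j = t, the no-fork probability is e^{-λ(N_M−1)t}. -/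
/-!
The events "miner `i` wins and nobody forks" are disjoint for different `i`, since
`x i + t k < x k` and `x k + t i < x i` contradict `t ≥ 0`. Conditionally on the winning
time `T i = a ≥ 0`, each other miner `j` independently finishes after `a + t j` with
probability `exp (-λ (a + t j))`, so the event for `i` has probability
`∫ λ e^{-λa} e^{-λ ((N-1) a + ∑_{j≠i} t j)} da = e^{-λ ∑_{j≠i} t j} / N`.
-/

open MeasureTheory ProbabilityTheory Real Finset Function

section

variable {ι : Type*}

lemma pairwise_disjoint_setOf_forall_ne_add_lt {t : ι → ℝ} (ht : ∀ j, 0 ≤ t j) :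
    Pairwise (Disjoint on fun i : ι => {x : ι → ℝ | ∀ j, j ≠ i → x i + t j < x j}) := by
  intro i k hik
  refine Set.disjoint_left.2 fun x hi hk => ?_
  linarith [hi k hik.symm, hk i hik, ht i, ht k]

lemma measurableSet_setOf_forall_ne_add_lt [Countable ι] (t : ι → ℝ) (i : ι) :
    MeasurableSet {x : ι → ℝ | ∀ j, j ≠ i → x i + t j < x j} := by
  simp only [Set.ofPred_forall]
  exact .iInter fun j => .iInter fun _ =>
    measurableSet_lt ((measurable_pi_apply i).add_const _) (measurable_pi_apply j)

end

namespace ProbabilityTheory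

lemma expMeasure_eq_withDensity (lam : ℝ) :
    expMeasure lam = volume.withDensity (exponentialPDF lam) :=
  rfl

lemma measurable_exponentialPDF (lam : ℝ) : Measurable (exponentialPDF lam) :=
  (measurable_exponentialPDFReal lam).ennreal_ofReal

lemma ae_nonneg_expMeasure (lam : ℝ) : ∀ᵐ x ∂expMeasure lam, 0 ≤ x := by
  rw [expMeasure_eq_withDensity]
  refine (ae_withDensity_iff (measurable_exponentialPDF lam)).2
    (ae_of_all _ fun x hx => ?_)
  contrapose! hx
  exact exponentialPDF_of_neg hx

variable {lam : ℝ}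

lemma expMeasure_Ioi (hlam : 0 < lam) {a : ℝ} (ha : 0 ≤ a) :
    expMeasure lam (Set.Ioi a) = ENNReal.ofReal (exp (-(lam * a))) := by
  have := isProbabilityMeasure_expMeasure hlam
  have hIic : expMeasure lam (Set.Iic a) = ENNReal.ofReal (1 - exp (-(lam * a))) := by
    rw [expMeasure_eq_withDensity, withDensity_apply _ measurableSet_Iic,
      lintegral_exponentialPDF_eq_antiDeriv hlam, if_pos ha]
  have hexp_le : exp (-(lam * a)) ≤ 1 := exp_le_one_iff.2 (by nlinarith)
  rw [← Set.compl_Iic, prob_compl_eq_one_sub measurableSet_Iic, hIic, ← ENNReal.ofReal_one,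
    ← ENNReal.ofReal_sub _ (by linarith), sub_sub_cancel]

lemma lintegral_exp_neg_mul_expMeasure (hlam : 0 < lam) {c : ℝ} (hc : 0 ≤ c) :
    ∫⁻ x, ENNReal.ofReal (exp (-(c * x))) ∂expMeasure lam
      = ENNReal.ofReal (lam / (lam + c)) := by
  have hdens : ∀ x, exponentialPDF lam x * ENNReal.ofReal (exp (-(c * x)))
      = ENNReal.ofReal (lam / (lam + c)) * exponentialPDF (lam + c) x := by
    intro x
    rcases lt_or_ge x 0 with hx | hx
    · simp [exponentialPDF_of_neg hx]
    · rw [exponentialPDF_of_nonneg hx, exponentialPDF_of_nonneg hx,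
        ← ENNReal.ofReal_mul (by positivity), ← ENNReal.ofReal_mul (by positivity)]
      congr 1
      rw [mul_assoc, ← exp_add]
      field_simp
      ring_nf
  rw [expMeasure_eq_withDensity, lintegral_withDensity_eq_lintegral_mul _
      (measurable_exponentialPDF lam) (by fun_prop)]
  simp only [Pi.mul_apply, hdens]
  rw [lintegral_const_mul _ (measurable_exponentialPDF _),
    lintegral_exponentialPDF_eq_one (by linarith), mul_one]

end ProbabilityTheory

namespace MeasureTheory.Measure

variable {ι : Type*} [Fintype ι] [DecidableEq ι]

lemma pi_setOf_forall_ne_add_lt (ν : ι → Measure ℝ) [∀ j, SigmaFinite (ν j)]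
    (t : ι → ℝ) (i : ι) :
    Measure.pi ν {x | ∀ j, j ≠ i → x i + t j < x j}
      = ∫⁻ a, ∏ j ∈ univ.erase i, ν j (Set.Ioi (a + t j)) ∂ν i := by
  let e := MeasurableEquiv.piEquivPiSubtypeProd (fun _ : ι => ℝ) (· = i)
  let E : Set (({j // j = i} → ℝ) × ({j // ¬ j = i} → ℝ)) :=
    {q | ∀ j : {j // ¬ j = i}, q.1 default + t j < q.2 j}
  have hE : MeasurableSet E := by
    simp only [E, Set.ofPred_forall]
    exact .iInter fun j => measurableSet_lt
      (((measurable_pi_apply _).comp measurable_fst).add_const _)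
      ((measurable_pi_apply j).comp measurable_snd)
  have hpre : {x : ι → ℝ | ∀ j, j ≠ i → x i + t j < x j} = e ⁻¹' E := by
    ext x
    simp only [ne_eq, Set.mem_ofPred_eq, MeasurableEquiv.piEquivPiSubtypeProd,
      Equiv.piEquivPiSubtypeProd, MeasurableEquiv.coe_mk, Equiv.coe_fn_mk, Subtype.forall,
      Set.preimage_ofPred_eq, e, E]
    -- `(default : {j // j = i}).1` unfolds to `i`
    rfl
  have hslice : ∀ a,
      Prod.mk a ⁻¹' E = Set.univ.pi fun j : {j // ¬ j = i} => Set.Ioi (a default + t j) := by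
    intro a; ext b; simp [E, Set.mem_pi]
  have hG : Measurable fun a : ℝ => ∏ j ∈ univ.erase i, ν j (Set.Ioi (a + t j)) :=
    Antitone.measurable fun a b hab =>
      prod_le_prod' fun j _ => measure_mono (Set.Ioi_subset_Ioi (by linarith))
  rw [hpre, (measurePreserving_piEquivPiSubtypeProd ν _).measure_preimage hE.nullMeasurableSet,
    Measure.prod_apply hE]
  simp only [hslice, Measure.pi_pi]
  refine .trans ?_ ((measurePreserving_piUnique fun j : {j // j = i} => ν j).lintegral_comp hG)
  congr 1
  · congr
    exact Subsingleton.elim _ _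
  · funext a
    exact (prod_subtype (p := fun j => ¬ j = i) (univ.erase i) (by simp)
      fun j => ν j (Set.Ioi (a default + t j))).symm

end MeasureTheory.Measure

namespace ProbabilityTheory

variable {ι : Type*} [Fintype ι] [DecidableEq ι] {lam : ℝ}

lemma pi_expMeasure_setOf_forall_ne_add_lt (hlam : 0 < lam) {t : ι → ℝ} (ht : ∀ j, 0 ≤ t j)
    (i : ι) :
    Measure.pi (fun _ : ι => expMeasure lam) {x | ∀ j, j ≠ i → x i + t j < x j}
      = ENNReal.ofReal (exp (-(lam * ∑ j ∈ univ.erase i, t j)) / Fintype.card ι) := by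
  have := isProbabilityMeasure_expMeasure hlam
  set s := ∑ j ∈ univ.erase i, t j
  set m := #(univ.erase i)
  have hprod : ∀ a, 0 ≤ a → ∏ j ∈ univ.erase i, expMeasure lam (Set.Ioi (a + t j))
      = ENNReal.ofReal (exp (-(lam * s))) * ENNReal.ofReal (exp (-(lam * m * a))) := by
    intro a ha
    rw [prod_congr rfl fun j _ => expMeasure_Ioi hlam (add_nonneg ha (ht j)),
      ← ENNReal.ofReal_prod_of_nonneg fun j _ => (exp_pos _).le,
      ← ENNReal.ofReal_mul (exp_pos _).le, ← exp_sum, ← exp_add]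
    congr 2
    simp only [s, m, mul_add, sum_add_distrib, sum_neg_distrib, mul_sum, sum_const, nsmul_eq_mul]
    ring
  have hcard : (m : ℝ) + 1 = Fintype.card ι := by
    exact_mod_cast card_erase_add_one (mem_univ i)
  rw [Measure.pi_setOf_forall_ne_add_lt, lintegral_congr_ae ((ae_nonneg_expMeasure lam).mono hprod),
    lintegral_const_mul _ (by fun_prop),
    lintegral_exp_neg_mul_expMeasure hlam (by positivity), ← ENNReal.ofReal_mul (exp_pos _).le,
    ← hcard]
  congr 1
  field_simp
  ring

end ProbabilityTheory

/-- For `N_M` i.i.d. exponential(λ) mining times and nonnegative propagation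
delays `t j`, the no-forking probability (every non-winning miner finishes more
than its propagation delay after the winner) equals
`(1/N_M) ∑ i exp(-λ ∑_{j≠i} t j)`; in particular if all `t j = t` it equals
`exp(-λ (N_M - 1) t)`. -/
theorem no_fork_probability
    {Ω : Type*} [MeasurableSpace Ω] (μ : Measure Ω) [IsProbabilityMeasure μ]
    (NM : ℕ) (hNM : 1 ≤ NM) (lam : ℝ) (hlam : 0 < lam)
    (T : Fin NM → Ω → ℝ) (hmeas : ∀ j, Measurable (T j))
    (hindep : iIndepFun T μ)
    (hexp : ∀ j, Measure.map (T j) μ = expMeasure lam)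
    (t : Fin NM → ℝ) (ht : ∀ j, 0 ≤ t j) :
    μ {ω | ∃ i, ∀ j, j ≠ i → T i ω + t j < T j ω}
      = ENNReal.ofReal ((1 / (NM : ℝ)) *
          ∑ i : Fin NM, Real.exp (-(lam * ∑ j ∈ Finset.univ.erase i, t j))) ∧
    (∀ c : ℝ, 0 ≤ c → (∀ j, t j = c) →
      μ {ω | ∃ i, ∀ j, j ≠ i → T i ω + t j < T j ω}
        = ENNReal.ofReal (Real.exp (-(lam * ((NM : ℝ) - 1) * c)))) := by
  have hlaw : μ.map (fun ω j => T j ω) = Measure.pi fun _ => expMeasure lam := by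
    rw [hindep.map_fun_eq_pi_map fun j => (hmeas j).aemeasurable]
    simp only [hexp]
  have hevent : {ω | ∃ i, ∀ j, j ≠ i → T i ω + t j < T j ω}
      = (fun ω j => T j ω) ⁻¹' ⋃ i, {x | ∀ j, j ≠ i → x i + t j < x j} := by
    ext ω
    simp
  have hfork : μ {ω | ∃ i, ∀ j, j ≠ i → T i ω + t j < T j ω}
      = ENNReal.ofReal ((1 / (NM : ℝ)) *
          ∑ i : Fin NM, Real.exp (-(lam * ∑ j ∈ Finset.univ.erase i, t j))) := by
    rw [hevent, ← Measure.map_apply (measurable_pi_lambda _ hmeas)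
        (.iUnion (measurableSet_setOf_forall_ne_add_lt t)),
      hlaw, measure_iUnion (pairwise_disjoint_setOf_forall_ne_add_lt ht)
        (measurableSet_setOf_forall_ne_add_lt t), tsum_fintype]
    simp only [pi_expMeasure_setOf_forall_ne_add_lt hlam ht, Fintype.card_fin]
    rw [← ENNReal.ofReal_sum_of_nonneg fun i _ => by positivity, mul_sum]
    simp only [one_div_mul_eq_div]
  refine ⟨hfork, fun c _ hc => ?_⟩
  have hsum : ∀ i : Fin NM, ∑ j ∈ univ.erase i, t j = ((NM : ℝ) - 1) * c := by
    intro i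
    simp [hc, card_erase_of_mem, Nat.cast_sub hNM]
  rw [hfork]
  simp only [hsum, sum_const, card_univ, Fintype.card_fin, nsmul_eq_mul]
  congr 1
  field_simp
end
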